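/- Let 𝒜 = A_∅(k)· + ∑_{α≠∅} ⟨A_α(k,x_α)·⟩_α be an operator in the mixed algebra ℒ on L²([0,1)^N, ℂ^M) with continuous kernels. If 𝒜 is invertible as a bounded operator, then the multiplication operator A_∅(k)· is invertible, i.e. the matrix A_∅(k) is invertible for every k ∈ [0,1)^N. -/

import Mathlib

open MeasureTheory Set

noncomputable section

def cube (N : ℕ) : Set (Fin N → ℝ) := Set.univ.pi fun _ => Set.Ico (0:ℝ) 1

def dia {N : ℕ} (α : Finset (Fin N)) (x k : Fin N → ℝ) : Fin N → ℝ :=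
  fun i => if i ∈ α then x i else k i

lemma cube_measurable (N : ℕ) : MeasurableSet (cube N) :=
  MeasurableSet.univ_pi fun _ => measurableSet_Ico

lemma volume_cube (N : ℕ) : volume (cube N) = 1 := by
  rw [cube, volume_pi_pi]; simp

lemma cube_eq_pi_restrict (N : ℕ) :
    volume.restrict (cube N) = Measure.pi (fun _ : Fin N => volume.restrict (Ico (0:ℝ) 1)) := by
  refine (Measure.pi_eq fun s hs => ?_).symm
  rw [Measure.restrict_apply (MeasurableSet.univ_pi hs), cube, ← Set.pi_inter_distrib,
    volume_pi_pi]
  exact Finset.prod_congr rfl fun i _ => (Measure.restrict_apply (hs i)).symm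

lemma dia_measurable {N : ℕ} (α : Finset (Fin N)) :
    Measurable (fun p : (Fin N → ℝ) × (Fin N → ℝ) => dia α p.2 p.1) := by
  apply measurable_pi_iff.2
  intro i
  by_cases h : i ∈ α <;> simp only [dia, h, if_true, if_false]
  · exact (measurable_pi_apply i).comp measurable_snd
  · exact (measurable_pi_apply i).comp measurable_fst

lemma dia_measurePreserving {N : ℕ} (α : Finset (Fin N)) :
    MeasurePreserving (fun p : (Fin N → ℝ) × (Fin N → ℝ) => dia α p.2 p.1)
      ((volume.restrict (cube N)).prod (volume.restrict (cube N)))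
      (volume.restrict (cube N)) := by
  have hprob : IsProbabilityMeasure (volume.restrict (Ico (0:ℝ) 1)) := by
    constructor
    rw [Measure.restrict_apply_univ]
    simp
  refine ⟨(dia_measurable α), ?_⟩
  rw [cube_eq_pi_restrict]
  refine (Measure.pi_eq fun s hs => ?_).symm
  rw [Measure.map_apply (dia_measurable α) (MeasurableSet.univ_pi hs)]
  have hpre : (fun p : (Fin N → ℝ) × (Fin N → ℝ) => dia α p.2 p.1) ⁻¹' (univ.pi s) =
      (univ.pi fun i => if i ∈ α then univ else s i) ×ˢ
      (univ.pi fun i => if i ∈ α then s i else univ) := by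
    ext p
    simp only [Set.mem_preimage, Set.mem_pi, Set.mem_univ, forall_true_left, Set.mem_prod, dia]
    constructor
    · intro h
      constructor <;> intro i <;> by_cases hi : i ∈ α <;>
        simp only [hi, if_true, if_false, Set.mem_univ] <;> simpa [hi] using h i
    · rintro ⟨h1, h2⟩ i
      by_cases hi : i ∈ α
      · simpa [hi] using h2 i
      · simpa [hi] using h1 i
  rw [hpre, Measure.prod_prod, Measure.pi_pi, Measure.pi_pi,
    ← Finset.prod_mul_distrib]
  refine Finset.prod_congr rfl fun i _ => ?_
  by_cases hi : i ∈ α <;> simp [hi]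

def toE {M : ℕ} (w : Fin M → ℂ) : EuclideanSpace ℂ (Fin M) := WithLp.toLp 2 w

lemma euclidean_le_pi {M : ℕ} (w : Fin M → ℂ) :
    ‖toE w‖ ≤ Real.sqrt M * ‖w‖ := by
  rw [EuclideanSpace.norm_eq]
  have h1 : ∑ i, ‖w i‖ ^ 2 ≤ (M : ℝ) * ‖w‖ ^ 2 := by
    calc ∑ i, ‖w i‖ ^ 2 ≤ ∑ _i : Fin M, ‖w‖ ^ 2 := by
          refine Finset.sum_le_sum fun i _ => ?_
          exact pow_le_pow_left₀ (norm_nonneg _) (norm_le_pi_norm w i) 2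
      _ = (M : ℝ) * ‖w‖ ^ 2 := by simp [Finset.sum_const, Finset.card_univ, nsmul_eq_mul]
  calc Real.sqrt (∑ i, ‖toE w i‖ ^ 2) ≤ Real.sqrt ((M : ℝ) * ‖w‖ ^ 2) := Real.sqrt_le_sqrt h1
    _ = Real.sqrt M * ‖w‖ := by
        rw [Real.sqrt_mul (Nat.cast_nonneg M), Real.sqrt_sq (norm_nonneg _)]

lemma pi_le_euclidean {M : ℕ} (w : Fin M → ℂ) :
    ‖w‖ ≤ ‖toE w‖ := by
  refine pi_norm_le_iff_of_nonneg (norm_nonneg _) |>.2 fun i => ?_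
  rw [EuclideanSpace.norm_eq]
  have : ‖w i‖ ^ 2 ≤ ∑ j, ‖toE w j‖ ^ 2 :=
    Finset.single_le_sum (fun j _ => sq_nonneg ‖toE w j‖) (Finset.mem_univ i)
  calc ‖w i‖ = Real.sqrt (‖w i‖ ^ 2) := (Real.sqrt_sq (norm_nonneg _)).symm
    _ ≤ _ := Real.sqrt_le_sqrt this

lemma mulVec_pi_norm_le {M : ℕ} (A : Matrix (Fin M) (Fin M) ℂ) (c : ℝ)
    (hA : ∀ i j, ‖A i j‖ ≤ c) (w : Fin M → ℂ) (B : ℝ) (hB : ∀ j, ‖w j‖ ≤ B)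
    (hc : 0 ≤ c) (hBn : 0 ≤ B) :
    ‖A.mulVec w‖ ≤ c * M * B := by
  refine pi_norm_le_iff_of_nonneg (by positivity) |>.2 fun i => ?_
  show ‖∑ j, A i j * w j‖ ≤ _
  calc ‖∑ j, A i j * w j‖ ≤ ∑ j, ‖A i j * w j‖ := norm_sum_le _ _
    _ ≤ ∑ _j : Fin M, c * B := by
        refine Finset.sum_le_sum fun j _ => ?_
        rw [norm_mul]
        exact mul_le_mul (hA i j) (hB j) (norm_nonneg _) hc
    _ = c * M * B := by simp [Finset.sum_const, Finset.card_univ, nsmul_eq_mul]; ring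

set_option maxHeartbeats 2000000 in
/-- if the mixed operator `𝒜 = A_∅(k)· + ∑_{α≠∅} ⟨A_α(k,x_α)·⟩_α` on
`L²([0,1)^N,ℂ^M)` with continuous kernels is invertible as a bounded operator, then the
matrix `A_∅(k)` is invertible for every `k` in the cube.  (Each kernel `A_α` depends on
`x` only through the `α`-coordinates; in particular for `α = ∅` the summand
`∫_{cube} A_∅(k,x) u(k) dx = A_∅(k) u(k)` is the multiplication operator.) -/
theorem stmt_10 (N M : ℕ) (hM : 0 < M)
    (A : Finset (Fin N) → (Fin N → ℝ) → (Fin N → ℝ) → Matrix (Fin M) (Fin M) ℂ)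
    (hAcont : ∀ α i j, ContinuousOn (fun p : (Fin N → ℝ) × (Fin N → ℝ) => A α p.1 p.2 i j)
      ((cube N) ×ˢ (cube N)))
    (hAbdd : ∀ α, ∃ c, ∀ k x i j, ‖A α k x i j‖ ≤ c)
    (hAdep : ∀ α k x x', (∀ i ∈ α, x i = x' i) → A α k x = A α k x')
    (μ : Measure (Fin N → ℝ)) (hμ : μ = volume.restrict (cube N))
    (T : Lp (EuclideanSpace ℂ (Fin M)) 2 μ →L[ℂ] Lp (EuclideanSpace ℂ (Fin M)) 2 μ)
    (hT : ∀ u : Lp (EuclideanSpace ℂ (Fin M)) 2 μ, ∀ᵐ k ∂μ,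
      (T u : (Fin N → ℝ) → EuclideanSpace ℂ (Fin M)) k =
        (fun i => (∑ α : Finset (Fin N),
          ∫ x in cube N, (A α k x).mulVec (fun j => u (dia α x k) j)) i))
    -- 𝒜 is invertible as a bounded operator
    (hinv : ∃ S : Lp (EuclideanSpace ℂ (Fin M)) 2 μ →L[ℂ] Lp (EuclideanSpace ℂ (Fin M)) 2 μ,
      S.comp T = ContinuousLinearMap.id ℂ _ ∧ T.comp S = ContinuousLinearMap.id ℂ _) :
    ∀ k ∈ cube N, IsUnit (A ∅ k k) := by
  subst hμ
  intro k₀ hk₀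
  by_contra hunit
  -- a null vector of the matrix
  have hdet : (A ∅ k₀ k₀).det = 0 := by
    by_contra hd
    exact hunit ((Matrix.isUnit_iff_isUnit_det _).2 (isUnit_iff_ne_zero.2 hd))
  obtain ⟨v, hv0, hvA⟩ := (Matrix.exists_mulVec_eq_zero_iff).2 hdet
  obtain ⟨S, hST, _⟩ := hinv
  haveI hprob : IsProbabilityMeasure (volume.restrict (cube N)) :=
    ⟨by rw [Measure.restrict_apply_univ]; exact volume_cube N⟩
  -- constants
  have hVm : 0 < ‖toE v‖ := by
    rw [norm_pos_iff]
    intro h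
    exact hv0 (congrArg WithLp.ofLp h)
  set Vm := ‖toE v‖ with hVmdef
  have hvj : ∀ j, ‖v j‖ ≤ Vm := by
    intro j
    have h1 : ‖v j‖ ≤ ‖v‖ := norm_le_pi_norm v j
    exact h1.trans (pi_le_euclidean v)
  choose c hc using hAbdd
  have hc0 : ∀ α, 0 ≤ c α := fun α =>
    (norm_nonneg _).trans (hc α k₀ k₀ ⟨0, hM⟩ ⟨0, hM⟩)
  have hsqrtM : 0 < Real.sqrt M := Real.sqrt_pos.2 (by exact_mod_cast hM)
  set nS := ‖S‖ with hnSdef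
  have hnS0 : 0 ≤ nS := norm_nonneg S
  set δ₀ := Vm / (2 * Real.sqrt M * (nS + 1)) with hδ₀def
  have hδ₀ : 0 < δ₀ := by positivity
  -- continuity of k ↦ ‖A ∅ k k v‖ at k₀ within the cube
  set f : (Fin N → ℝ) → ℝ :=
    fun k => Real.sqrt (∑ i, ‖∑ j, A ∅ k k i j * v j‖ ^ 2) with hfdef
  have hf_eq : ∀ k, f k = ‖toE ((A ∅ k k).mulVec v)‖ := by
    intro k
    rw [EuclideanSpace.norm_eq]
    congr 1
  have hf0 : f k₀ = 0 := by
    rw [hf_eq, hvA]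
    have : toE (0 : Fin M → ℂ) = 0 := rfl
    rw [this, norm_zero]
  have hfc : ContinuousOn f (cube N) := by
    apply Real.continuous_sqrt.comp_continuousOn
    apply continuousOn_finset_sum
    intro i _
    apply ContinuousOn.pow
    apply continuous_norm.comp_continuousOn
    apply continuousOn_finset_sum
    intro j _
    refine ContinuousOn.mul ?_ continuousOn_const
    exact (hAcont ∅ i j).comp ((continuous_id.prodMk continuous_id).continuousOn)
      (fun k hk => ⟨hk, hk⟩)
  obtain ⟨r, hr0, hr⟩ := (Metric.continuousWithinAt_iff.1 (hfc k₀ hk₀)) δ₀ hδ₀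
  -- the small parameter η and box size ε = η²
  set KK := ∑ α : Finset (Fin N), Real.sqrt M * (c α * M * Vm) with hKKdef
  have hKK0 : 0 ≤ KK := Finset.sum_nonneg fun α _ =>
    mul_nonneg (Real.sqrt_nonneg _) (mul_nonneg (mul_nonneg (hc0 α) (Nat.cast_nonneg M)) hVm.le)
  set η := min 1 (min (r/4) (Vm / (2 * (nS+1) * (KK+1)))) with hηdef
  have hη0 : 0 < η := by
    have h1 : 0 < Vm / (2 * (nS+1) * (KK+1)) := div_pos hVm (by nlinarith)
    exact lt_min one_pos (lt_min (div_pos hr0 (by norm_num)) h1)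
  have hη1 : η ≤ 1 := min_le_left _ _
  have hηr : η ≤ r/4 := le_trans (min_le_right _ _) (min_le_left _ _)
  have hηK : η ≤ Vm / (2 * (nS+1) * (KK+1)) := le_trans (min_le_right _ _) (min_le_right _ _)
  set ε := η^2 with hεdef
  have hε0 : 0 < ε := by positivity
  have hε1 : ε ≤ 1 := by nlinarith
  have hεη : ε ≤ η := by nlinarith
  -- the corner of the box
  set a : Fin N → ℝ := fun i => min (k₀ i) (1 - ε) with hadef
  have hk₀i : ∀ i, 0 ≤ k₀ i ∧ k₀ i < 1 := fun i => hk₀ i (Set.mem_univ i)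
  have ha0 : ∀ i, 0 ≤ a i := fun i => le_min (hk₀i i).1 (by linarith)
  have ha1 : ∀ i, a i + ε ≤ 1 := fun i => by
    have h := min_le_right (k₀ i) (1 - ε)
    rw [hadef]
    simp only []
    linarith
  have hak : ∀ i, a i ≤ k₀ i ∧ k₀ i - a i ≤ ε := by
    intro i
    have h1 : a i = min (k₀ i) (1 - ε) := rfl
    rcases le_total (k₀ i) (1 - ε) with h | h
    · rw [h1, min_eq_left h]
      exact ⟨le_rfl, by linarith⟩
    · rw [h1, min_eq_right h]
      exact ⟨h, by linarith [(hk₀i i).2]⟩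
  -- the boxes
  set Sb : Finset (Fin N) → Set (Fin N → ℝ) :=
    fun α => univ.pi fun i => if i ∈ α then Ico (0:ℝ) 1 else Ico (a i) (a i + ε) with hSbdef
  set box : Finset (Fin N) → Set (Fin N → ℝ) :=
    fun α => univ.pi fun i => if i ∈ α then Ico (a i) (a i + ε) else Ico (0:ℝ) 1 with hboxdef
  have hifm : ∀ (p : Prop) [Decidable p] (s t : Set ℝ), MeasurableSet s → MeasurableSet t →
      MeasurableSet (if p then s else t) := by
    intro p _ s t hs ht
    by_cases h : p
    · rw [if_pos h]; exact hs
    · rw [if_neg h]; exact ht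
  have hSbm : ∀ α, MeasurableSet (Sb α) := fun α =>
    MeasurableSet.univ_pi fun i => hifm _ _ _ measurableSet_Ico measurableSet_Ico
  have hboxm : ∀ α, MeasurableSet (box α) := fun α =>
    MeasurableSet.univ_pi fun i => hifm _ _ _ measurableSet_Ico measurableSet_Ico
  have hifsub : ∀ (p : Prop) [Decidable p] (s t : Set ℝ), s ⊆ Ico (0:ℝ) 1 → t ⊆ Ico (0:ℝ) 1 →
      (if p then s else t) ⊆ Ico (0:ℝ) 1 := by
    intro p _ s t hs ht
    by_cases h : p
    · rw [if_pos h]; exact hs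
    · rw [if_neg h]; exact ht
  have hIcoSub : ∀ i, Ico (a i) (a i + ε) ⊆ Ico (0:ℝ) 1 :=
    fun i => Ico_subset_Ico (ha0 i) (ha1 i)
  have hSbcube : ∀ α, Sb α ⊆ cube N := fun α =>
    Set.pi_mono fun i _ => hifsub _ _ _ Subset.rfl (hIcoSub i)
  have hboxcube : ∀ α, box α ⊆ cube N := fun α =>
    Set.pi_mono fun i _ => hifsub _ _ _ (hIcoSub i) Subset.rfl
  have hμgen : ∀ (t : Fin N → Set ℝ), (∀ i, MeasurableSet (t i)) → (∀ i, t i ⊆ Ico 0 1) →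
      volume.restrict (cube N) (univ.pi t) = ∏ i, volume (t i) := by
    intro t ht hsub
    have hsubc : univ.pi t ⊆ cube N := fun x hx i hi => hsub i (hx i hi)
    rw [Measure.restrict_apply (MeasurableSet.univ_pi ht),
      Set.inter_eq_self_of_subset_left hsubc, volume_pi_pi]
  have hvolIco : ∀ i, volume (Ico (a i) (a i + ε)) = ENNReal.ofReal ε := by
    intro i
    rw [Real.volume_Ico]
    congr 1
    ring
  have hμSb : ∀ α, volume.restrict (cube N) (Sb α) = ENNReal.ofReal (ε ^ (αᶜ.card)) := by
    intro α
    rw [hSbdef]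
    rw [hμgen _ (fun i => hifm _ _ _ measurableSet_Ico measurableSet_Ico)
      (fun i => hifsub _ _ _ Subset.rfl (hIcoSub i))]
    have : ∀ i, volume (if i ∈ α then Ico (0:ℝ) 1 else Ico (a i) (a i + ε)) =
        (if i ∈ αᶜ then ENNReal.ofReal ε else 1) := by
      intro i
      by_cases h : i ∈ α
      · rw [if_pos h, if_neg (by simpa using h), Real.volume_Ico]
        norm_num
      · rw [if_neg h, if_pos (Finset.mem_compl.2 h), hvolIco i]
    rw [Finset.prod_congr rfl fun i _ => this i, Finset.prod_ite_mem, Finset.univ_inter,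
      Finset.prod_const, ← ENNReal.ofReal_pow hε0.le]
  have hμbox : ∀ α, volume.restrict (cube N) (box α) = ENNReal.ofReal (ε ^ (α.card)) := by
    intro α
    rw [hboxdef]
    rw [hμgen _ (fun i => hifm _ _ _ measurableSet_Ico measurableSet_Ico)
      (fun i => hifsub _ _ _ (hIcoSub i) Subset.rfl)]
    have : ∀ i, volume (if i ∈ α then Ico (a i) (a i + ε) else Ico (0:ℝ) 1) =
        (if i ∈ α then ENNReal.ofReal ε else 1) := by
      intro i
      by_cases h : i ∈ α
      · rw [if_pos h, if_pos h, hvolIco i]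
      · rw [if_neg h, if_neg h, Real.volume_Ico]
        norm_num
    rw [Finset.prod_congr rfl fun i _ => this i, Finset.prod_ite_mem, Finset.univ_inter,
      Finset.prod_const, ← ENNReal.ofReal_pow hε0.le]
  -- the test element u
  have hSbfin : volume.restrict (cube N) (Sb ∅) ≠ ⊤ := measure_ne_top _ _
  set u := indicatorConstLp 2 (hSbm ∅) hSbfin (toE v) with hudef
  have hpow_half : ∀ m : ℕ, (ε ^ m) ^ (1/2 : ℝ) = η ^ m := by
    intro m
    have h1 : ε ^ m = (η ^ m) ^ (2:ℕ) := by rw [hεdef, ← pow_mul, ← pow_mul, mul_comm]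
    rw [h1, ← Real.rpow_natCast (η ^ m) 2, ← Real.rpow_mul (by positivity)]
    norm_num
  have hcardcompl : ((∅ : Finset (Fin N))ᶜ).card = N := by simp
  have hnu : ‖u‖ = Vm * η ^ N := by
    rw [hudef, norm_indicatorConstLp two_ne_zero ENNReal.ofNat_ne_top]
    rw [measureReal_def, hμSb (∅ : Finset (Fin N)), hcardcompl, ENNReal.toReal_ofReal (by positivity)]
    have h2 : (1 / ENNReal.toReal 2) = (1/2 : ℝ) := by norm_num
    rw [h2, hpow_half N]
  -- a.e. identification of u with the indicator, also along dia
  set ind : (Fin N → ℝ) → EuclideanSpace ℂ (Fin M) :=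
    (Sb ∅).indicator (fun _ => toE v) with hinddef
  have hucoe : (u : (Fin N → ℝ) → EuclideanSpace ℂ (Fin M)) =ᵐ[volume.restrict (cube N)] ind :=
    indicatorConstLp_coeFn
  have hdia : ∀ α : Finset (Fin N), ∀ᵐ k ∂(volume.restrict (cube N)),
      ∀ᵐ x ∂(volume.restrict (cube N)),
        (u : (Fin N → ℝ) → EuclideanSpace ℂ (Fin M)) (dia α x k) = ind (dia α x k) := by
    intro α
    have h1 := (dia_measurePreserving (N := N) α).quasiMeasurePreserving.ae_eq_comp hucoe
    exact Measure.ae_ae_of_ae_prod h1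
  -- the indicator bound constants
  set eα : Finset (Fin N) → ℝ :=
    fun α => if α = ∅ then δ₀ else c α * M * Vm * ε ^ α.card with heαdef
  have hcMV0 : ∀ α, 0 ≤ c α * M * Vm :=
    fun α => mul_nonneg (mul_nonneg (hc0 α) (Nat.cast_nonneg M)) hVm.le
  have heα_eq : ∀ α, eα α = if α = ∅ then δ₀ else c α * ↑M * Vm * ε ^ α.card := fun α => rfl
  have heα0 : ∀ α, 0 ≤ eα α := by
    intro α
    rw [heα_eq α]
    by_cases h : α = ∅
    · rw [if_pos h]; exact hδ₀.le
    · rw [if_neg h]; exact mul_nonneg (hcMV0 α) (pow_nonneg hε0.le _)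
  -- the key bound on each single term
  have hIα : ∀ k, k ∈ cube N → ∀ α : Finset (Fin N),
      (∀ᵐ x ∂(volume.restrict (cube N)),
        (u : (Fin N → ℝ) → EuclideanSpace ℂ (Fin M)) (dia α x k) = ind (dia α x k)) →
      ‖∫ x in cube N, (A α k x).mulVec
          (fun j => (u : (Fin N → ℝ) → EuclideanSpace ℂ (Fin M)) (dia α x k) j)‖
        ≤ (Sb α).indicator (fun _ => eα α) k := by
    intro k hkc α hae
    have hstep1 : (∫ x in cube N, (A α k x).mulVec
          (fun j => (u : (Fin N → ℝ) → EuclideanSpace ℂ (Fin M)) (dia α x k) j))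
        = ∫ x in cube N, (A α k x).mulVec (ind (dia α x k)) := by
      refine integral_congr_ae (hae.mono fun x hx => ?_)
      show (A α k x).mulVec
          (fun j => (u : (Fin N → ℝ) → EuclideanSpace ℂ (Fin M)) (dia α x k) j)
          = (A α k x).mulVec (ind (dia α x k))
      rw [hx]
    rw [hstep1]
    by_cases hα : α = ∅
    · subst hα
      have hdia0 : ∀ x : Fin N → ℝ, dia ∅ x k = k := fun x => funext fun i => by simp [dia]
      have hconst : ∀ x : Fin N → ℝ,
          (A ∅ k x).mulVec (ind (dia ∅ x k)) = (A ∅ k k).mulVec (ind k) := by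
        intro x
        rw [hdia0 x, hAdep ∅ k x k (fun i hi => absurd hi (by simp))]
      rw [integral_congr_ae (Filter.Eventually.of_forall hconst), integral_const]
      rw [measureReal_def, measure_univ, ENNReal.toReal_one, one_smul]
      by_cases hk : k ∈ Sb ∅
      · have hindk : ind k = toE v := by rw [hinddef, Set.indicator_of_mem hk]
        rw [hindk]
        have hkIco : ∀ i, k i ∈ Ico (a i) (a i + ε) := by
          intro i
          have h2 := hk i (Set.mem_univ i)
          simpa using h2
        have hdist : dist k k₀ ≤ 2*ε := by
          refine (dist_pi_le_iff (by positivity)).2 fun i => ?_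
          rw [Real.dist_eq, abs_le]
          have h1 := (hak i).1
          have h2 := (hak i).2
          have h3 := (hkIco i).1
          have h4 := (hkIco i).2
          constructor <;> [linarith; linarith]
        have hdistr : dist k k₀ < r := by
          have : 2*ε ≤ r/2 := by linarith [hεη, hηr]
          linarith [hr0]
        have hfk : f k < δ₀ := by
          have h5 := hr hkc hdistr
          rw [hf0, Real.dist_eq, sub_zero] at h5
          exact (le_abs_self _).trans_lt h5
        have h6 : ‖(A ∅ k k).mulVec (toE v)‖ ≤ f k := by
          rw [hf_eq]
          exact pi_le_euclidean _
        rw [Set.indicator_of_mem hk]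
        have h7 : eα ∅ = δ₀ := by rw [heα_eq ∅, if_pos rfl]
        rw [h7]
        exact h6.trans_lt hfk |>.le
      · have hindk : ind k = 0 := by rw [hinddef, Set.indicator_of_notMem hk]
        rw [hindk, Set.indicator_of_notMem hk]
        have : (A ∅ k k).mulVec (0 : EuclideanSpace ℂ (Fin M)) = 0 := Matrix.mulVec_zero _
        rw [this, norm_zero]
    · by_cases hk : k ∈ Sb α
      · have hptw : ∀ᵐ x ∂(volume.restrict (cube N)),
            ‖(A α k x).mulVec (ind (dia α x k))‖ ≤
            (box α).indicator (fun _ => c α * ↑M * Vm) x := by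
          filter_upwards [ae_restrict_mem (cube_measurable N)] with x hx
          by_cases hdx : dia α x k ∈ Sb ∅
          · have hxbox : x ∈ box α := by
              intro i _
              show x i ∈ (if i ∈ α then Ico (a i) (a i + ε) else Ico (0:ℝ) 1)
              by_cases hi : i ∈ α
              · rw [if_pos hi]
                have h2 := hdx i (Set.mem_univ i)
                simp only [Finset.notMem_empty, if_false] at h2
                have h3 : dia α x k i = x i := if_pos hi
                rwa [h3] at h2
              · rw [if_neg hi]
                exact hx i (Set.mem_univ i)
            rw [Set.indicator_of_mem hxbox, hinddef, Set.indicator_of_mem hdx]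
            exact mulVec_pi_norm_le _ _ (fun i j => hc α k x i j) _ _ hvj (hc0 α) hVm.le
          · rw [hinddef, Set.indicator_of_notMem hdx]
            have hmv : (A α k x).mulVec (0 : EuclideanSpace ℂ (Fin M)) = 0 :=
              Matrix.mulVec_zero _
            rw [hmv, norm_zero]
            exact Set.indicator_nonneg (fun _ _ => hcMV0 α) x
        calc ‖∫ x in cube N, (A α k x).mulVec (ind (dia α x k))‖
            ≤ ∫ x in cube N, ‖(A α k x).mulVec (ind (dia α x k))‖ :=
              norm_integral_le_integral_norm _
          _ ≤ ∫ x in cube N, (box α).indicator (fun _ => c α * ↑M * Vm) x :=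
              integral_mono_of_nonneg (Filter.Eventually.of_forall fun x => norm_nonneg _)
                ((integrable_const _).indicator (hboxm α)) hptw
          _ = (volume.restrict (cube N) (box α)).toReal • (c α * ↑M * Vm) :=
              integral_indicator_const _ (hboxm α)
          _ = eα α := by
              rw [hμbox α, ENNReal.toReal_ofReal (pow_nonneg hε0.le _), heα_eq α, if_neg hα,
                smul_eq_mul]
              ring
          _ = (Sb α).indicator (fun _ => eα α) k := by rw [Set.indicator_of_mem hk]
      · have hne : ∃ i, i ∉ α ∧ k i ∉ Ico (a i) (a i + ε) := by
          by_contra h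
          push_neg at h
          apply hk
          intro i _
          show k i ∈ (if i ∈ α then Ico (0:ℝ) 1 else Ico (a i) (a i + ε))
          by_cases hi : i ∈ α
          · rw [if_pos hi]; exact hkc i (Set.mem_univ i)
          · rw [if_neg hi]; exact h i hi
        obtain ⟨i0, hi0α, hi0⟩ := hne
        have hzero : ∀ x : Fin N → ℝ, ind (dia α x k) = 0 := by
          intro x
          rw [hinddef]
          apply Set.indicator_of_notMem
          intro hmem
          have h2 := hmem i0 (Set.mem_univ i0)
          simp only [Finset.notMem_empty, if_false] at h2
          have h3 : dia α x k i0 = k i0 := if_neg hi0α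
          rw [h3] at h2
          exact hi0 h2
        have hint0 : (∫ x in cube N, (A α k x).mulVec (ind (dia α x k))) = 0 := by
          have h8 : ∀ x : Fin N → ℝ, (A α k x).mulVec (ind (dia α x k)) = 0 := fun x => by
            rw [hzero x]; exact Matrix.mulVec_zero _
          simp only [h8, integral_zero]
        rw [hint0, norm_zero]
        exact Set.indicator_nonneg (fun _ _ => heα0 α) k
  -- a.e. pointwise bound on ‖T u‖
  have hbound : ∀ᵐ k ∂(volume.restrict (cube N)),
      ‖(T u : (Fin N → ℝ) → EuclideanSpace ℂ (Fin M)) k‖ ≤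
        ∑ α : Finset (Fin N), (Sb α).indicator (fun _ => Real.sqrt M * eα α) k := by
    filter_upwards [hT u, ae_restrict_mem (cube_measurable N), ae_all_iff.2 hdia]
      with k hk hkc hkd
    have hk' : (T u : (Fin N → ℝ) → EuclideanSpace ℂ (Fin M)) k = toE (∑ α : Finset (Fin N),
        ∫ x in cube N, (A α k x).mulVec
          (fun j => (u : (Fin N → ℝ) → EuclideanSpace ℂ (Fin M)) (dia α x k) j)) :=
      congrArg (WithLp.toLp 2) hk
    rw [hk']
    refine le_trans (euclidean_le_pi (∑ α : Finset (Fin N),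
      ∫ x in cube N, (A α k x).mulVec
        (fun j => (u : (Fin N → ℝ) → EuclideanSpace ℂ (Fin M)) (dia α x k) j))) ?_
    calc Real.sqrt M * ‖∑ α : Finset (Fin N),
          ∫ x in cube N, (A α k x).mulVec
            (fun j => (u : (Fin N → ℝ) → EuclideanSpace ℂ (Fin M)) (dia α x k) j)‖
        ≤ Real.sqrt M * ∑ α : Finset (Fin N), ‖∫ x in cube N, (A α k x).mulVec
            (fun j => (u : (Fin N → ℝ) → EuclideanSpace ℂ (Fin M)) (dia α x k) j)‖ :=
          mul_le_mul_of_nonneg_left (norm_sum_le _ _) (Real.sqrt_nonneg _)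
      _ ≤ Real.sqrt M * ∑ α : Finset (Fin N), (Sb α).indicator (fun _ => eα α) k :=
          mul_le_mul_of_nonneg_left
            (Finset.sum_le_sum fun α _ => hIα k hkc α (hkd α)) (Real.sqrt_nonneg _)
      _ = ∑ α : Finset (Fin N), (Sb α).indicator (fun _ => Real.sqrt M * eα α) k := by
          rw [Finset.mul_sum]
          refine Finset.sum_congr rfl fun α _ => ?_
          by_cases h : k ∈ Sb α
          · rw [Set.indicator_of_mem h, Set.indicator_of_mem h]
          · rw [Set.indicator_of_notMem h, Set.indicator_of_notMem h, mul_zero]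
  -- L² bound on T u
  have hcards : ∀ α : Finset (Fin N), α.card + αᶜ.card = N := by
    intro α
    rw [Finset.card_add_card_compl, Fintype.card_fin]
  have hTub : ‖T u‖ ≤ Real.sqrt M * δ₀ * η ^ N + KK * η ^ (N+1) := by
    have hsm : ∀ α : Finset (Fin N), AEStronglyMeasurable
        ((Sb α).indicator (fun _ => Real.sqrt M * eα α) : (Fin N → ℝ) → ℝ)
        (volume.restrict (cube N)) :=
      fun α => (stronglyMeasurable_const.indicator (hSbm α)).aestronglyMeasurable
    have h2 : eLpNorm ((T u : (Fin N → ℝ) → EuclideanSpace ℂ (Fin M))) 2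
          (volume.restrict (cube N))
        ≤ ∑ α : Finset (Fin N), eLpNorm
            ((Sb α).indicator fun _ => Real.sqrt M * eα α) 2 (volume.restrict (cube N)) := by
      refine le_trans (eLpNorm_mono_ae ?_) (eLpNorm_sum_le (f := fun α => (Sb α).indicator fun _ => Real.sqrt M * eα α)
        (s := Finset.univ) (fun α _ => hsm α) one_le_two)
      filter_upwards [hbound] with k hkb
      refine hkb.trans ?_
      rw [Finset.sum_apply, Real.norm_eq_abs]
      exact le_abs_self _
    have h3 : ∀ α : Finset (Fin N), eLpNorm
          ((Sb α).indicator fun _ => Real.sqrt M * eα α) 2 (volume.restrict (cube N))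
        = ENNReal.ofReal ((Real.sqrt M * eα α) * η ^ (αᶜ.card)) := by
      intro α
      rw [eLpNorm_indicator_const (hSbm α) two_ne_zero ENNReal.ofNat_ne_top, hμSb α]
      have hhalf : (1 / ENNReal.toReal 2) = (1/2 : ℝ) := by norm_num
      rw [hhalf, ENNReal.ofReal_rpow_of_nonneg (pow_nonneg hε0.le _) (by norm_num),
        hpow_half, Real.enorm_eq_ofReal (mul_nonneg (Real.sqrt_nonneg _) (heα0 α)),
        ← ENNReal.ofReal_mul (mul_nonneg (Real.sqrt_nonneg _) (heα0 α))]
    have h4 : eLpNorm ((T u : (Fin N → ℝ) → EuclideanSpace ℂ (Fin M))) 2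
          (volume.restrict (cube N))
        ≤ ENNReal.ofReal (∑ α : Finset (Fin N), (Real.sqrt M * eα α) * η ^ (αᶜ.card)) := by
      refine h2.trans ?_
      rw [ENNReal.ofReal_sum_of_nonneg
        (fun α _ => mul_nonneg (mul_nonneg (Real.sqrt_nonneg _) (heα0 α)) (pow_nonneg hη0.le _))]
      exact Finset.sum_le_sum fun α _ => (h3 α).le
    have h5 : ‖T u‖ ≤ ∑ α : Finset (Fin N), (Real.sqrt M * eα α) * η ^ (αᶜ.card) := by
      rw [Lp.norm_def]
      refine ENNReal.toReal_le_of_le_ofReal ?_ h4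
      exact Finset.sum_nonneg
        (fun α _ => mul_nonneg (mul_nonneg (Real.sqrt_nonneg _) (heα0 α)) (pow_nonneg hη0.le _))
    refine h5.trans ?_
    rw [← Finset.add_sum_erase _ _ (Finset.mem_univ (∅ : Finset (Fin N)))]
    have hterm0 : (Real.sqrt M * eα ∅) * η ^ ((∅ : Finset (Fin N))ᶜ.card)
        = Real.sqrt M * δ₀ * η ^ N := by
      rw [heα_eq ∅, if_pos rfl, hcardcompl]
    rw [hterm0]
    refine add_le_add le_rfl ?_
    calc ∑ α ∈ Finset.univ.erase (∅ : Finset (Fin N)), (Real.sqrt M * eα α) * η ^ (αᶜ.card)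
        ≤ ∑ α ∈ Finset.univ.erase (∅ : Finset (Fin N)),
            (Real.sqrt M * (c α * M * Vm)) * η ^ (N+1) := by
          refine Finset.sum_le_sum fun α hαe => ?_
          have hαne : α ≠ ∅ := (Finset.mem_erase.1 hαe).1
          rw [heα_eq α, if_neg hαne]
          have hεpow : ε ^ α.card = η ^ (2 * α.card) := by
            rw [hεdef, ← pow_mul, mul_comm]
          rw [hεpow]
          have hexp : (Real.sqrt M * (c α * ↑M * Vm * η ^ (2 * α.card))) * η ^ (αᶜ.card)
              = (Real.sqrt M * (c α * ↑M * Vm)) * η ^ (2 * α.card + αᶜ.card) := by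
            rw [pow_add]; ring
          rw [hexp]
          refine mul_le_mul_of_nonneg_left ?_
            (mul_nonneg (Real.sqrt_nonneg _) (hcMV0 α))
          refine pow_le_pow_of_le_one hη0.le hη1 ?_
          have hα1 : 1 ≤ α.card := Finset.card_pos.2 (Finset.nonempty_iff_ne_empty.2 hαne)
          have := hcards α
          omega
      _ ≤ KK * η ^ (N+1) := by
          rw [← Finset.sum_mul]
          refine mul_le_mul_of_nonneg_right ?_ (pow_nonneg hη0.le _)
          rw [hKKdef]
          refine Finset.sum_le_sum_of_subset_of_nonneg (Finset.erase_subset _ _) ?_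
          intro α _ _
          exact mul_nonneg (Real.sqrt_nonneg _) (hcMV0 α)
  -- conclusion
  have hSTu : S (T u) = u := by
    have h := ContinuousLinearMap.ext_iff.1 hST u
    simpa using h
  have hle : ‖u‖ ≤ nS * ‖T u‖ := by
    have h1 : ‖u‖ = ‖S (T u)‖ := by rw [hSTu]
    rw [h1]
    exact S.le_opNorm _
  have hδeq : Real.sqrt M * δ₀ * (2*(nS+1)) = Vm := by
    rw [hδ₀def]
    field_simp
  have hB : (0:ℝ) < nS + 1 := by linarith
  have hηVm : η * (2*(nS+1)*(KK+1)) ≤ Vm := by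
    rw [← le_div_iff₀ (by positivity)]
    exact hηK
  have hpN : (0:ℝ) < η ^ N := pow_pos hη0 N
  have e1 : nS * (Real.sqrt M * δ₀ * η ^ N) ≤ (Vm/2) * η ^ N := by
    have h1 : nS * (Real.sqrt M * δ₀) ≤ Vm / 2 := by
      nlinarith [mul_nonneg (Real.sqrt_nonneg (M:ℝ)) hδ₀.le]
    nlinarith
  have e2 : nS * (KK * η ^ (N+1)) < (Vm/2) * η ^ N := by
    have h1 : nS * KK * η < (nS+1) * (KK+1) * η :=
      mul_lt_mul_of_pos_right (by nlinarith) hη0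
    have h2 : (nS+1) * (KK+1) * η ≤ Vm / 2 := by
      calc (nS+1) * (KK+1) * η = (η * (2*(nS+1)*(KK+1)))/2 := by ring
        _ ≤ Vm / 2 := by linarith
    have h3 : nS * (KK * η ^ (N+1)) = (nS * KK * η) * η ^ N := by
      rw [pow_succ]; ring
    rw [h3]
    calc (nS * KK * η) * η ^ N < ((nS+1) * (KK+1) * η) * η ^ N :=
          mul_lt_mul_of_pos_right h1 hpN
      _ ≤ (Vm/2) * η ^ N := mul_le_mul_of_nonneg_right h2 hpN.le
  have hfinal : Vm * η ^ N < Vm * η ^ N := by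
    calc Vm * η ^ N = ‖u‖ := hnu.symm
      _ ≤ nS * ‖T u‖ := hle
      _ ≤ nS * (Real.sqrt M * δ₀ * η ^ N + KK * η ^ (N+1)) :=
          mul_le_mul_of_nonneg_left hTub hnS0
      _ = nS * (Real.sqrt M * δ₀ * η ^ N) + nS * (KK * η ^ (N+1)) := by ring
      _ < (Vm/2) * η ^ N + (Vm/2) * η ^ N := by
          exact add_lt_add_of_le_of_lt e1 e2
      _ = Vm * η ^ N := by ring
  exact absurd hfinal (lt_irrefl _)
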